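/- Let K be a metric space equipped with a Borel measure μ, let G be a countable group acting on K by isometries that preserve μ, and let F ⊆ K be a measurable fundamental domain for the action. Let x ∈ K, r > 0, and let m ≥ 1 be a natural number such that μ(B_r(x)) > m · μ(F), where B_r(x) is the open ball of radius r about x. Then there exists a point q ∈ K and m − 1 pairwise distinct group elements g₂, ..., g_m ∈ G, each different from the identity, such that dist(q, gᵢ • q) ≤ 2r for every i ∈ {2, ..., m}. -/

import Mathlib

/-!
Count, for each point `p`, how many translates `g • B` of the ball `B = B_r(x)` contain it.
Integrating this multiplicity over the fundamental domain `F` gives `μ B > m * μ F`, so some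
`p` lies in more than `m` translates `g₀ • B, g₁ • B, …`. Then `q = g₀⁻¹ • p ∈ B` and each
`gᵢ⁻¹ g₀` moves `q` to `gᵢ⁻¹ • p ∈ B`, a displacement of at most `2r`.
-/

open MeasureTheory
open scoped ENNReal Pointwise

theorem ENNReal.tsum_indicator_one_eq_encard {ι α : Type*} (s : ι → Set α) (p : α) :
    ∑' i, (s i).indicator 1 p = ({i | p ∈ s i}.encard : ℝ≥0∞) := by
  rw [← ENNReal.tsum_set_one, tsum_subtype {i | p ∈ s i} fun _ => 1]
  congr 1 with i

theorem Set.exists_mem_exists_embedding_fin_of_lt_encard {α : Type*} {S : Set α} {n : ℕ}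
    (h : (n : ℕ∞) < S.encard) : ∃ a ∈ S, ∃ e : Fin n ↪ α, ∀ i, e i ∈ S ∧ e i ≠ a := by
  obtain ⟨a, ha⟩ : S.Nonempty := Set.nonempty_of_encard_ne_zero (ne_bot_of_gt h)
  have hcard : ({⟨a, ha⟩} : Set S).ncard + n ≤ ENat.card S := by
    rw [Set.ncard_singleton, add_comm]
    exact Order.add_one_le_of_lt h
  obtain ⟨e, he⟩ := Fin.Embedding.exists_embedding_disjoint_range_of_add_le_ENat_card hcard
  refine ⟨a, ha, e.trans (Function.Embedding.subtype _), fun i => ⟨(e i).2, fun hi => ?_⟩⟩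
  exact Set.disjoint_singleton_left.1 he ⟨i, Subtype.ext hi⟩

namespace MeasureTheory.IsFundamentalDomain

variable {G α : Type*} [Group G] [Countable G] [MulAction G α] [MeasurableSpace α]
  [MeasurableConstSMul G α] {μ : Measure α} [SMulInvariantMeasure G α μ] {F t : Set α}

theorem exists_lt_encard_setOf_mem_smul (hF : IsFundamentalDomain G F μ)
    (ht : NullMeasurableSet t μ) {m : ℕ} (h : m * μ F < μ t) :
    ∃ p, (m : ℕ∞) < {g : G | p ∈ g • t}.encard := by
  by_contra! hle
  have hts (g : G) : NullMeasurableSet (g • t) (μ.restrict F) :=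
    (ht.smul g).mono Measure.restrict_le_self
  refine h.not_ge ?_
  calc μ t = ∑' g : G, μ (g • t ∩ F) := hF.measure_eq_tsum t
    _ = ∑' g : G, ∫⁻ p in F, (g • t).indicator 1 p ∂μ := by
      congr 1 with g
      rw [lintegral_indicator_one₀ (hts g), Measure.restrict_apply₀' hF.nullMeasurableSet]
    _ = ∫⁻ p in F, ({g : G | p ∈ g • t}.encard : ℝ≥0∞) ∂μ := by
      rw [← lintegral_tsum (f := fun g p => (g • t).indicator 1 p)
        fun g => aemeasurable_one.indicator₀ (hts g)]
      simp_rw [ENNReal.tsum_indicator_one_eq_encard]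
    _ ≤ ∫⁻ _ in F, (m : ℝ≥0∞) ∂μ := by
      gcongr with p
      exact_mod_cast hle p
    _ = m * μ F := setLIntegral_const F _

end MeasureTheory.IsFundamentalDomain

theorem metric_blichfeldt_short_elements_general {K : Type*} [MetricSpace K]
    [MeasurableSpace K] [BorelSpace K]
    {G : Type*} [Group G] [Countable G] [MulAction G K]
    (hiso : ∀ (g : G) (x y : K), dist (g • x) (g • y) = dist x y)
    (μ : Measure K) [SMulInvariantMeasure G K μ]
    {F : Set K} (hF : IsFundamentalDomain G F μ)
    (x : K) (r : ℝ) (m : ℕ)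
    (h : (m : ℝ≥0∞) * μ F < μ (Metric.ball x r)) :
    ∃ q : K, ∃ g : Fin (m - 1) → G, Function.Injective g ∧
      ∀ i, g i ≠ 1 ∧ dist q (g i • q) ≤ 2 * r := by
  have : MeasurableConstSMul G K := ⟨fun g => (Isometry.of_dist_eq (hiso g)).continuous.measurable⟩
  obtain ⟨p, hp⟩ := hF.exists_lt_encard_setOf_mem_smul measurableSet_ball.nullMeasurableSet h
  obtain ⟨g₀, hg₀, e, he⟩ := Set.exists_mem_exists_embedding_fin_of_lt_encard (n := m - 1)
    (lt_of_le_of_lt (by exact_mod_cast m.sub_le 1) hp)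
  have hball : ∀ g ∈ {g : G | p ∈ g • Metric.ball x r}, dist (g⁻¹ • p) x < r := fun g hg =>
    Set.mem_smul_set_iff_inv_smul_mem.1 hg
  refine ⟨g₀⁻¹ • p, fun i => (e i)⁻¹ * g₀, fun i j hij => e.injective (by simpa using hij),
    fun i => ⟨fun hi => (he i).2 (inv_mul_eq_one.1 hi), ?_⟩⟩
  rw [mul_smul, smul_inv_smul]
  linarith [dist_triangle_right (g₀⁻¹ • p) ((e i)⁻¹ • p) x, hball g₀ hg₀, hball _ (he i).1]

/-- **Metric-measure form of the paper's Corollary 1.**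
Let `G` be a countable group acting on a metric space `K` by isometries preserving a
Borel measure `μ`, with measurable fundamental domain `F` of finite measure. If
`μ (B_r x) > m * μ F` for some `m ≥ 1`, then there is a point `q` and `m - 1` pairwise
distinct non-identity group elements `g` with `dist q (g • q) ≤ 2r`. -/
theorem metric_blichfeldt_short_elements {K : Type*} [MetricSpace K]
    [MeasurableSpace K] [BorelSpace K]
    {G : Type*} [Group G] [Countable G] [MulAction G K]
    (hiso : ∀ (g : G) (x y : K), dist (g • x) (g • y) = dist x y)
    (μ : Measure K) [SMulInvariantMeasure G K μ]
    {F : Set K} (hFmeas : MeasurableSet F) (hF : IsFundamentalDomain G F μ)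
    (hFfin : μ F < ⊤)
    (x : K) (r : ℝ) (hr : 0 < r) (m : ℕ) (hm : 1 ≤ m)
    (h : (m : ℝ≥0∞) * μ F < μ (Metric.ball x r)) :
    ∃ q : K, ∃ g : Fin (m - 1) → G, Function.Injective g ∧
      ∀ i, g i ≠ 1 ∧ dist q (g i • q) ≤ 2 * r :=
  metric_blichfeldt_short_elements_general hiso μ hF x r m h
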